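/- Let T and V be N×N real matrices and Δt > 0, and define the leapfrog energy functional for the 1D model e^{n+1} = e^n + Δt T h^{n+1/2}, h^{n+1/2} = h^{n−1/2} − Δt V e^n with V = Tᵀ. Then the quantity Q^n = ⟨e^n, e^n⟩ + ⟨h^{n+1/2}, h^{n−1/2}⟩ is conserved: Q^{n+1} = Q^n for all n. -/

import Mathlib

open Matrix

/-! With `h k` standing for `h^{k-1/2}`, over one step
`⟨e^{n+1}, e^{n+1}⟩ - ⟨e^n, e^n⟩ = Δt ⟨e^n + e^{n+1}, T h^{n+1/2}⟩`, while
`h^{n+3/2} - h^{n-1/2} = -Δt Tᵀ (e^n + e^{n+1})` changes the cross term by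
`-Δt ⟨Tᵀ (e^n + e^{n+1}), h^{n+1/2}⟩`; the two changes cancel. -/

theorem leapfrog_energy_step {R m n : Type*} [CommRing R] [Fintype m] [Fintype n]
    (T : Matrix m n R) (τ : R) {e e' : m → R} {h₀ h₁ h₂ : n → R}
    (hh₁ : h₁ = h₀ - τ • Tᵀ *ᵥ e) (he : e' = e + τ • T *ᵥ h₁)
    (hh₂ : h₂ = h₁ - τ • Tᵀ *ᵥ e') :
    e' ⬝ᵥ e' + h₂ ⬝ᵥ h₁ = e ⬝ᵥ e + h₁ ⬝ᵥ h₀ := by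
  have change_e : e' ⬝ᵥ e' - e ⬝ᵥ e = τ * ((e + e') ⬝ᵥ T *ᵥ h₁) := by
    subst he
    simp only [add_dotProduct, dotProduct_add, dotProduct_smul, smul_dotProduct, smul_eq_mul,
      dotProduct_comm (T *ᵥ h₁) e]
    ring
  have jump_h : h₂ - h₀ = -(τ • Tᵀ *ᵥ (e + e')) := by
    rw [hh₂, hh₁, mulVec_add, smul_add]
    abel
  have change_h : h₂ ⬝ᵥ h₁ - h₀ ⬝ᵥ h₁ = -(τ * ((e + e') ⬝ᵥ T *ᵥ h₁)) := by
    rw [← sub_dotProduct, jump_h, neg_dotProduct, smul_dotProduct, mulVec_transpose,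
      dotProduct_mulVec, smul_eq_mul]
  linear_combination change_e + change_h + dotProduct_comm h₀ h₁

theorem stmt_13_general {N : ℕ} (T V : Matrix (Fin N) (Fin N) ℝ) (hV : V = T.transpose)
    (Δt : ℝ) (e h : ℕ → Fin N → ℝ)
    (hh : ∀ n : ℕ, h (n + 1) = h n - Δt • V.mulVec (e n))
    (he : ∀ n : ℕ, e (n + 1) = e n + Δt • T.mulVec (h (n + 1))) :
    ∀ n : ℕ,
      e (n + 1) ⬝ᵥ e (n + 1) + h (n + 2) ⬝ᵥ h (n + 1) =
        e n ⬝ᵥ e n + h (n + 1) ⬝ᵥ h n := by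
  subst hV
  intro n
  exact leapfrog_energy_step T Δt (hh n) (he n) (hh (n + 1))

/-- Discrete energy conservation of the explicit staggered leapfrog scheme
`e^{n+1} = e^n + Δt T h^{n+1/2}`, `h^{n+1/2} = h^{n−1/2} − Δt V e^n` with `V = Tᵀ`:
the quantity `Q^n = ⟨e^n, e^n⟩ + ⟨h^{n+1/2}, h^{n−1/2}⟩` is conserved.
Here `h n` denotes `h^{n−1/2}`. -/
theorem stmt_13 {N : ℕ} (T V : Matrix (Fin N) (Fin N) ℝ) (hV : V = T.transpose)
    (Δt : ℝ) (hΔt : 0 < Δt) (e h : ℕ → Fin N → ℝ)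
    (hh : ∀ n : ℕ, h (n + 1) = h n - Δt • V.mulVec (e n))
    (he : ∀ n : ℕ, e (n + 1) = e n + Δt • T.mulVec (h (n + 1))) :
    ∀ n : ℕ,
      e (n + 1) ⬝ᵥ e (n + 1) + h (n + 2) ⬝ᵥ h (n + 1) =
        e n ⬝ᵥ e n + h (n + 1) ⬝ᵥ h n :=
  stmt_13_general T V hV Δt e h hh he
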